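/- arXiv:1910.06502 — 4 statements merged into one kernel-verified Lean document; each statement's English description precedes it below -/
import Mathlib

section
/- For an even natural number ℓ and a natural number j with j ≤ ℓ/2, the binomial coefficient satisfies C(ℓ, 2j) = C(ℓ/2, j) · (1/2)_{ℓ/2} / ((1/2)_j · (1/2)_{ℓ/2 - j}), where (1/2)_k is the rising factorial evaluated in ℚ. -/
open Polynomial Nat

/-- `(1/2)(3/2)⋯((2k-1)/2) = (2k-1)!! / 2^k` and `(2k)! = (2k-1)!! · 2^k k!`. -/
theorem ascPochhammer_eval_half {K : Type*} [Field K] [CharZero K] (k : ℕ) :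
    (ascPochhammer K k).eval (1 / 2) = (2 * k)! / (4 ^ k * k !) := by
  induction k with
  | zero => simp
  | succ k ih =>
    rw [ascPochhammer_succ_right, eval_mul, ih, eval_add, eval_X, eval_natCast,
      show 2 * (k + 1) = 2 * k + 1 + 1 by ring, Nat.factorial_succ, Nat.factorial_succ,
      Nat.factorial_succ]
    push_cast
    field_simp
    ring

/-- For even `ℓ` and `j ≤ ℓ/2`:
`C(ℓ, 2j) = C(ℓ/2, j) · (1/2)_{ℓ/2} / ((1/2)_j (1/2)_{ℓ/2-j})` in `ℚ`. -/
theorem choose_two_mul_eq (ℓ j : ℕ) (hℓ : Even ℓ) (hj : j ≤ ℓ / 2) :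
    (ℓ.choose (2 * j) : ℚ)
      = ((ℓ / 2).choose j : ℚ) * (ascPochhammer ℚ (ℓ / 2)).eval (1 / 2)
          / ((ascPochhammer ℚ j).eval (1 / 2) * (ascPochhammer ℚ (ℓ / 2 - j)).eval (1 / 2)) := by
  obtain ⟨m, rfl⟩ := hℓ
  rw [show (m + m) / 2 = m by omega] at hj ⊢
  obtain ⟨k, rfl⟩ := Nat.exists_eq_add_of_le hj
  rw [show j + k + (j + k) = 2 * j + 2 * k by omega, Nat.cast_choose ℚ (Nat.le_add_right _ _),
    Nat.cast_choose ℚ hj, Nat.add_sub_cancel_left, Nat.add_sub_cancel_left,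
    ← mul_add, ascPochhammer_eval_half, ascPochhammer_eval_half, ascPochhammer_eval_half]
  field_simp
  ring
end

section
/- Let p be an odd prime, r ≥ 2, and let (L, Q) be a nondegenerate quadratic ℤ/p^rℤ-module of the form (ℤ/p^rℤ)^{2m} with the split form Q(x,y) = ∑_i x_i y_i (m ≥ 1). Let η ∈ L be such that the reduction of η mod p is nonzero and Q(η) is a unit mod p. Then ∑_{x ∈ L, Q(x) = 0 in ℤ/p^rℤ} ψ((η,x)) = 0, where ψ is an additive character of ℤ/p^rℤ of exact order p^r and (·,·) is the bilinear form associated to Q. -/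
/-!
Detect `Q x = 0` by orthogonality: `p^r · S = ∑_t ∑_x ψ(t Q(x) + (η,x))`. For a non-unit `t`,
translating `x` by the isotropic vector `p^{r-1} e`, with `e` a basis vector paired with a unit
coordinate of `η`, multiplies the inner sum by a nontrivial value of `ψ`, so it vanishes. For a
unit `t`, completing the square gives `ψ(-t⁻¹ Q(η)) · p^{rm}`, and `-t⁻¹ Q(η)` runs over the units
with `t`. The sum of `ψ` over the units is zero since `r ≥ 2` makes `p^{r-1}` nilpotent, so the
units are stable under translation by it while `ψ(p^{r-1}) ≠ 1`.
-/

open Finset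

theorem AddChar.sum_eq_zero_of_map_add_eq {α M K : Type*} [AddGroup α] [AddMonoid M]
    [CommRing K] [IsDomain K] (ψ : AddChar M K) {s : Finset α} (f : α → M) (w : α) {c : M}
    (hs : ∀ x, x + w ∈ s ↔ x ∈ s) (hf : ∀ x ∈ s, f (x + w) = f x + c) (hc : ψ c ≠ 1) :
    ∑ x ∈ s, ψ (f x) = 0 := by
  refine eq_zero_of_mul_eq_self_left hc ?_
  rw [mul_sum]
  refine sum_equiv (Equiv.addRight w) (fun x => (hs x).symm) fun x hx => ?_
  rw [Equiv.coe_addRight, hf x hx, AddChar.map_add_eq_mul, mul_comm]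

theorem sum_units_eq_sum_filter_isUnit {R M : Type*} [Monoid R] [Fintype R]
    [DecidablePred (IsUnit : R → Prop)] [Fintype Rˣ] [AddCommMonoid M] (f : R → M) :
    ∑ u : Rˣ, f u = ∑ t ∈ univ.filter IsUnit, f t := by
  refine sum_nbij (↑) (fun u _ => by simp) (fun u _ v _ => Units.ext) (fun t ht => ?_)
    fun _ _ => rfl
  obtain ⟨u, rfl⟩ := (mem_filter.1 ht).2
  exact ⟨u, mem_coe.2 (mem_univ u), rfl⟩

theorem AddChar.sum_units_eq_zero_of_isNilpotent {R K : Type*} [CommRing R] [Fintype R]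
    [DecidableEq R] [CommRing K] [IsDomain K] (ψ : AddChar R K) {ε : R} (hε : IsNilpotent ε)
    (hψε : ψ ε ≠ 1) :
    ∑ u : Rˣ, ψ u = 0 := by
  classical
  rw [sum_units_eq_sum_filter_isUnit]
  refine ψ.sum_eq_zero_of_map_add_eq id ε (fun x => ?_) (fun _ _ => rfl) hψε
  simp only [mem_filter, mem_univ, true_and]
  refine ⟨fun h => ?_, fun h => hε.isUnit_add_left_of_commute h (.all _ _)⟩
  simpa using hε.neg.isUnit_add_left_of_commute h (.all _ _)

theorem AddChar.card_mul_sum_filter_eq_sum_sum {R K α : Type*} [CommRing R] [Fintype R]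
    [DecidableEq R] [CommRing K] [IsDomain K] [Fintype α] {ψ : AddChar R K} (hψ : ψ.IsPrimitive)
    (g h : α → R) :
    (Fintype.card R : K) * ∑ x ∈ univ.filter (fun x => g x = 0), ψ (h x) =
      ∑ t, ∑ x, ψ (t * g x + h x) := by
  simp_rw [AddChar.map_add_eq_mul]
  rw [sum_comm, sum_filter, mul_sum]
  refine sum_congr rfl fun x _ => ?_
  rw [← sum_mul, sum_mulShift _ hψ]
  split_ifs <;> simp

namespace ZMod

variable {p r : ℕ}

theorem prime_pow_pred_ne_zero (hp : p.Prime) (hr : 0 < r) :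
    (p : ZMod (p ^ r)) ^ (r - 1) ≠ 0 := by
  rw [← Nat.cast_pow, Ne, natCast_eq_zero_iff, Nat.pow_dvd_pow_iff_le_right hp.one_lt]
  omega

theorem mul_prime_pow_pred_eq_zero_of_not_isUnit (hp : p.Prime) (hr : 0 < r) {t : ZMod (p ^ r)}
    (ht : ¬IsUnit t) : t * (p : ZMod (p ^ r)) ^ (r - 1) = 0 := by
  have : NeZero (p ^ r) := ⟨pow_ne_zero r hp.ne_zero⟩
  rw [← natCast_zmod_val t, isUnit_natCast_iff_not_dvd_pow hp hr, not_not] at ht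
  obtain ⟨k, hk⟩ := ht
  rw [← natCast_zmod_val t, hk, Nat.cast_mul, mul_comm, ← mul_assoc, ← pow_succ,
    Nat.sub_add_cancel hr, ← Nat.cast_pow, natCast_self, zero_mul]

theorem isNilpotent_prime_pow_pred (hr : 2 ≤ r) : IsNilpotent ((p : ZMod (p ^ r)) ^ (r - 1)) := by
  refine ⟨2, ?_⟩
  rw [← pow_mul, ← Nat.cast_pow, natCast_eq_zero_iff]
  exact pow_dvd_pow p (by omega)

end ZMod

namespace QuadraticMap

variable {R M K : Type*} [CommRing R] [AddCommGroup M] [Module R M] [Fintype M]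
  [CommRing K] (ψ : AddChar R K) (Q : QuadraticForm R M)

theorem sum_addChar_mul_add_polar_eq_zero [IsDomain K] {t : R} (η : M) {w : M}
    (hw : Q w = 0) (ht : ∀ x, t * polar Q x w = 0) (hψ : ψ (polar Q η w) ≠ 1) :
    ∑ x, ψ (t * Q x + polar Q η x) = 0 := by
  refine ψ.sum_eq_zero_of_map_add_eq _ w (fun _ => by simp) (fun x _ => ?_) hψ
  rw [QuadraticMap.map_add (Q : M → R), polar_add_right, hw]
  linear_combination ht x

theorem sum_addChar_units_mul_add_polar (u : Rˣ) (η : M) :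
    ∑ x, ψ (u * Q x + polar Q η x) = ψ (-(↑u⁻¹ * Q η)) * ∑ x, ψ (u * Q x) := by
  have h_square : ∀ x,
      u * Q x + polar Q η x = u * Q (x + (↑u⁻¹ : R) • η) + -(↑u⁻¹ * Q η) := by
    intro x
    rw [QuadraticMap.map_add (Q : M → R), QuadraticMap.map_smul, polar_smul_right,
      polar_comm _ x η, smul_eq_mul, smul_eq_mul]
    linear_combination (-(↑u⁻¹ * Q η) - polar Q η x) * u.mul_inv
  simp_rw [h_square, AddChar.map_add_eq_mul, ← sum_mul, mul_comm]
  congr 1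
  exact Fintype.sum_equiv (Equiv.addRight _) _ _ fun _ => rfl

end QuadraticMap

section SplitForm

open QuadraticMap

variable (R ι : Type*) [CommRing R] [Fintype ι]

def splitForm : QuadraticForm R ((ι → R) × (ι → R)) :=
  LinearMap.BilinMap.toQuadraticMap
    ((dotProductBilin R R).compl₁₂ (LinearMap.fst R _ _) (LinearMap.snd R _ _))

variable {R ι}

theorem splitForm_apply (v : (ι → R) × (ι → R)) : splitForm R ι v = v.1 ⬝ᵥ v.2 := rfl

theorem polar_splitForm (v w : (ι → R) × (ι → R)) :
    polar (splitForm R ι) v w = v.1 ⬝ᵥ w.2 + w.1 ⬝ᵥ v.2 :=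
  LinearMap.BilinMap.polar_toQuadraticMap _ _

variable [Fintype R] [DecidableEq ι] {K : Type*} [CommRing K] [IsDomain K] {ψ : AddChar R K}

theorem sum_addChar_units_mul_splitForm (hψ : ψ.IsPrimitive) (u : Rˣ) :
    ∑ x, ψ (u * splitForm R ι x) = (Fintype.card R : K) ^ Fintype.card ι := by
  classical
  have h_inner : ∀ y : ι → R, ∑ z, ψ (u * splitForm R ι (y, z)) =
      if y = 0 then (Fintype.card R : K) ^ Fintype.card ι else 0 := by
    intro y
    split_ifs with hy
    · simp [hy, splitForm_apply]
    obtain ⟨i, hi⟩ := Function.ne_iff.1 hy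
    obtain ⟨a, ha⟩ := AddChar.ne_one_iff.1 (hψ ((Units.mul_right_eq_zero u).not.2 hi))
    rw [AddChar.mulShift_apply] at ha
    refine ψ.sum_eq_zero_of_map_add_eq _ (Pi.single i a) (fun _ => by simp) (fun z _ => ?_) ha
    simp only [splitForm_apply, dotProduct_add, dotProduct_single]
    ring
  rw [Fintype.sum_prod_type]
  simp_rw [h_inner]
  simp

theorem sum_addChar_mul_splitForm_add_polar_eq_zero {t ε : R} (hε : t * ε = 0)
    {η : (ι → R) × (ι → R)} (hη : (∃ i, ψ (η.1 i * ε) ≠ 1) ∨ ∃ i, ψ (ε * η.2 i) ≠ 1) :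
    ∑ x, ψ (t * splitForm R ι x + polar (splitForm R ι) η x) = 0 := by
  rcases hη with ⟨i, hi⟩ | ⟨i, hi⟩
  · refine sum_addChar_mul_add_polar_eq_zero ψ _ η (w := (0, Pi.single i ε))
      (by simp [splitForm_apply]) (fun x => ?_) (by simpa [polar_splitForm] using hi)
    simp only [polar_splitForm, dotProduct_single, zero_dotProduct, add_zero]
    linear_combination x.1 i * hε
  · refine sum_addChar_mul_add_polar_eq_zero ψ _ η (w := (Pi.single i ε, 0))
      (by simp [splitForm_apply]) (fun x => ?_) (by simpa [polar_splitForm] using hi)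
    simp only [polar_splitForm, single_dotProduct, dotProduct_zero, zero_add]
    linear_combination x.2 i * hε

theorem sum_units_sum_addChar_mul_splitForm_add_polar_eq_zero [DecidableEq R]
    (hψ : ψ.IsPrimitive) (hunits : ∑ u : Rˣ, ψ u = 0) {η : (ι → R) × (ι → R)}
    (hη : IsUnit (splitForm R ι η)) :
    ∑ u : Rˣ, ∑ x, ψ (u * splitForm R ι x + polar (splitForm R ι) η x) = 0 := by
  simp_rw [sum_addChar_units_mul_add_polar, sum_addChar_units_mul_splitForm hψ, ← sum_mul]
  have h_reindex : ∑ u : Rˣ, ψ (-(↑u⁻¹ * splitForm R ι η)) = ∑ u : Rˣ, ψ u :=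
    Fintype.sum_equiv ((Equiv.inv _).trans ((Equiv.mulRight hη.unit).trans (Equiv.neg _))) _ _
      fun u => by simp
  rw [h_reindex, hunits, zero_mul]

end SplitForm

theorem isotropic_char_sum_mod_prime_pow_general (p : ℕ) [Fact p.Prime]
    (r : ℕ) (hr : 2 ≤ r) (m : ℕ)
    (Q : (Fin m → ZMod (p ^ r)) × (Fin m → ZMod (p ^ r)) → ZMod (p ^ r))
    (hQ : ∀ v, Q v = ∑ i, v.1 i * v.2 i)
    (η : (Fin m → ZMod (p ^ r)) × (Fin m → ZMod (p ^ r)))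
    (hη₁ : (∃ i, IsUnit (η.1 i)) ∨ ∃ i, IsUnit (η.2 i))
    (hη₂ : IsUnit (Q η))
    (ψ : AddChar (ZMod (p ^ r)) ℂ) (hψ : ∀ a, ψ a = 1 ↔ a = 0) :
    ∑ x ∈ Finset.univ.filter (fun x => Q x = 0), ψ (Q (η + x) - Q η - Q x) = 0 := by
  obtain rfl : Q = splitForm (ZMod (p ^ r)) (Fin m) := funext hQ
  show ∑ x ∈ _, ψ (QuadraticMap.polar _ η x) = 0
  have hp : p.Prime := Fact.out
  have hψ_prim := AddChar.zmod_char_primitive_of_eq_one_only_at_zero _ ψ fun a => (hψ a).1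
  set ε := (p : ZMod (p ^ r)) ^ (r - 1)
  have hψε : ∀ a, IsUnit a → ψ (a * ε) ≠ 1 := fun a ha h =>
    ZMod.prime_pow_pred_ne_zero hp (by omega) (ha.mul_right_eq_zero.1 ((hψ _).1 h))
  have hunits : ∑ u : (ZMod (p ^ r))ˣ, ψ u = 0 :=
    ψ.sum_units_eq_zero_of_isNilpotent (ZMod.isNilpotent_prime_pow_pred hr)
      (by simpa using hψε 1 isUnit_one)
  refine (mul_eq_zero.1 ?_).resolve_left
    (Nat.cast_ne_zero.2 (Fintype.card_ne_zero (α := ZMod (p ^ r))))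
  rw [AddChar.card_mul_sum_filter_eq_sum_sum hψ_prim, ← sum_filter_add_sum_filter_not _ IsUnit,
    ← sum_units_eq_sum_filter_isUnit,
    sum_units_sum_addChar_mul_splitForm_add_polar_eq_zero hψ_prim hunits hη₂, zero_add]
  refine sum_eq_zero fun t ht => sum_addChar_mul_splitForm_add_polar_eq_zero
    (ZMod.mul_prime_pow_pred_eq_zero_of_not_isUnit hp (by omega) (mem_filter.1 ht).2) ?_
  rcases hη₁ with ⟨i, hi⟩ | ⟨i, hi⟩
  exacts [.inl ⟨i, hψε _ hi⟩, .inr ⟨i, mul_comm ε _ ▸ hψε _ hi⟩]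

/-- Let `p` be an odd prime, `r ≥ 2`, `L = (ℤ/p^rℤ)^{2m}` with the split form
`Q(x,y) = ∑ x_i y_i`, and `η ∈ L` unramified (some coordinate a unit, and `Q(η)` a unit).
If `ψ` is an additive character of `ℤ/p^rℤ` of exact order `p^r`, then
`∑_{Q(x)=0} ψ((η,x)) = 0`, where `(η,x) = Q(η+x) - Q(η) - Q(x)`. -/
theorem isotropic_char_sum_mod_prime_pow (p : ℕ) [Fact p.Prime] (hodd : p ≠ 2)
    (r : ℕ) (hr : 2 ≤ r) (m : ℕ) (hm : 1 ≤ m)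
    (Q : (Fin m → ZMod (p ^ r)) × (Fin m → ZMod (p ^ r)) → ZMod (p ^ r))
    (hQ : ∀ v, Q v = ∑ i, v.1 i * v.2 i)
    (η : (Fin m → ZMod (p ^ r)) × (Fin m → ZMod (p ^ r)))
    (hη₁ : (∃ i, IsUnit (η.1 i)) ∨ ∃ i, IsUnit (η.2 i))
    (hη₂ : IsUnit (Q η))
    (ψ : AddChar (ZMod (p ^ r)) ℂ) (hψ : ∀ a, ψ a = 1 ↔ a = 0) :
    ∑ x ∈ Finset.univ.filter (fun x => Q x = 0), ψ (Q (η + x) - Q η - Q x) = 0 :=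
  isotropic_char_sum_mod_prime_pow_general p r hr m Q hQ η hη₁ hη₂ ψ hψ
end

section
/- For every natural number m ≥ 1 and every complex number s with Re(s) > m/2, the integral over ℝ^m of (1 + ‖x‖²/2)^{-s} dx converges and equals (2π)^{m/2} · Γ(s - m/2) / Γ(s). -/
/-!
Write `Γ(s) (1 + ‖x‖²/2)^{-s} = ∫₀^∞ t^{s-1} e^{-(1 + ‖x‖²/2) t} dt` and integrate over `x` first:
the Gaussian integral `∫ e^{-t‖x‖²/2} dx = (2π/t)^{n/2}` leaves
`(2π)^{n/2} ∫₀^∞ t^{s-n/2-1} e^{-t} dt = (2π)^{n/2} Γ(s - n/2)`.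
The same computation with `Re s` in place of `s` bounds the modulus of the double integrand,
which justifies Fubini exactly when `Re s > n/2`.
-/

open MeasureTheory Real

open Set Module

open scoped Complex

lemma cpow_neg_mul_Gamma_eq_integral {r : ℝ} (hr : 0 < r) {s : ℂ} (hs : 0 < s.re) :
    (r : ℂ) ^ (-s) * Complex.Gamma s = ∫ t in Ioi (0 : ℝ), (t : ℂ) ^ (s - 1) * cexp (-(r * t)) := by
  have harg : (r : ℂ).arg ≠ π := by rw [Complex.arg_ofReal_of_nonneg hr.le]; exact pi_ne_zero.symm
  rw [Complex.integral_cpow_mul_exp_neg_mul_Ioi hs hr, one_div, Complex.inv_cpow _ _ harg,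
    Complex.cpow_neg]

lemma ofReal_norm_cpow_mul_cexp_neg_mul {t : ℝ} (ht : 0 < t) (r : ℝ) (s : ℂ) :
    ((‖(t : ℂ) ^ (s - 1) * cexp (-(r * t))‖ : ℝ) : ℂ)
      = (t : ℂ) ^ ((s.re : ℂ) - 1) * cexp (-(r * t)) := by
  rw [norm_mul, Complex.norm_cpow_eq_rpow_re_of_pos ht, Complex.norm_exp]
  push_cast
  rw [Complex.ofReal_cpow ht.le, ← Complex.ofReal_exp]
  simp

lemma cexp_neg_one_add_norm_sq_div_two_mul {E : Type*} [SeminormedAddCommGroup E] (x : E) (t : ℝ) :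
    cexp (-(((1 + ‖x‖ ^ 2 / 2 : ℝ) : ℂ) * t)) = rexp (-t) * cexp (-(t / 2 : ℂ) * ‖x‖ ^ 2) := by
  push_cast
  rw [← Complex.exp_add]
  ring_nf

section InnerProductSpace

variable {V : Type*} [NormedAddCommGroup V] [InnerProductSpace ℝ V] [FiniteDimensional ℝ V]
  [MeasurableSpace V] [BorelSpace V]

lemma integral_cpow_mul_cexp_neg_one_add_norm_sq_div_two_mul {t : ℝ} (ht : 0 < t) (s : ℂ) :
    ∫ x : V, (t : ℂ) ^ (s - 1) * cexp (-(((1 + ‖x‖ ^ 2 / 2 : ℝ) : ℂ) * t))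
      = ((2 * π : ℝ) : ℂ) ^ ((finrank ℝ V : ℂ) / 2)
          * (rexp (-t) * (t : ℂ) ^ (s - finrank ℝ V / 2 - 1)) := by
  have hb : 0 < (t / 2 : ℂ).re := by simpa using ht
  have ht' : (t : ℂ) ≠ 0 := by exact_mod_cast ht.ne'
  have hπ : (π : ℂ) / (t / 2) = ((2 * π : ℝ) : ℂ) * ((t⁻¹ : ℝ) : ℂ) := by
    push_cast; field_simp
  have harg : (t : ℂ).arg ≠ π := by rw [Complex.arg_ofReal_of_nonneg ht.le]; exact pi_ne_zero.symm
  simp_rw [cexp_neg_one_add_norm_sq_div_two_mul, ← mul_assoc]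
  rw [integral_const_mul, GaussianFourier.integral_cexp_neg_mul_sq_norm hb, hπ,
    Complex.mul_cpow_ofReal_nonneg (by positivity) (by positivity), Complex.ofReal_inv,
    Complex.inv_cpow _ _ harg, ← Complex.cpow_neg]
  calc _ = ((2 * π : ℝ) : ℂ) ^ ((finrank ℝ V : ℂ) / 2) *
        (rexp (-t) * ((t : ℂ) ^ (s - 1) * (t : ℂ) ^ (-((finrank ℝ V : ℂ) / 2)))) := by ring
    _ = _ := by rw [← Complex.cpow_add _ _ ht']; ring_nf

lemma integrable_cpow_mul_cexp_neg_one_add_norm_sq_div_two_mul {s : ℂ}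
    (hs : (finrank ℝ V : ℝ) / 2 < s.re) :
    Integrable (Function.uncurry fun (x : V) (t : ℝ) =>
        (t : ℂ) ^ (s - 1) * cexp (-(((1 + ‖x‖ ^ 2 / 2 : ℝ) : ℂ) * t)))
      ((volume : Measure V).prod (volume.restrict (Ioi 0))) := by
  have hmeas : Measurable (Function.uncurry fun (x : V) (t : ℝ) =>
      (t : ℂ) ^ (s - 1) * cexp (-(((1 + ‖x‖ ^ 2 / 2 : ℝ) : ℂ) * t))) := by
    fun_prop
  rw [integrable_prod_iff' hmeas.aestronglyMeasurable]
  constructor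
  · filter_upwards [ae_restrict_mem measurableSet_Ioi] with t (ht : 0 < t)
    simp_rw [Function.uncurry_apply_pair, cexp_neg_one_add_norm_sq_div_two_mul, ← mul_assoc]
    refine Integrable.const_mul ?_ _
    simpa using GaussianFourier.integrable_cexp_neg_mul_sq_norm_add (V := V)
      (show 0 < (t / 2 : ℂ).re by simpa using ht) 0 0
  · have hre : 0 < ((s.re : ℂ) - finrank ℝ V / 2).re := by simpa using hs
    have hΓ := (Complex.GammaIntegral_convergent hre).const_mul
      (((2 * π : ℝ) : ℂ) ^ ((finrank ℝ V : ℂ) / 2))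
    have hnorm : IntegrableOn (fun t : ℝ => ((∫ x : V, ‖(t : ℂ) ^ (s - 1) *
        cexp (-(((1 + ‖x‖ ^ 2 / 2 : ℝ) : ℂ) * t))‖ : ℝ) : ℂ)) (Ioi 0) := by
      refine IntegrableOn.congr_fun hΓ (fun t (ht : 0 < t) => ?_) measurableSet_Ioi
      rw [← integral_complex_ofReal]
      simp only [ofReal_norm_cpow_mul_cexp_neg_mul ht]
      rw [integral_cpow_mul_cexp_neg_one_add_norm_sq_div_two_mul ht]
    simpa using hnorm.re

theorem integrable_and_integral_one_add_norm_sq_div_two_cpow_neg {s : ℂ}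
    (hs : (finrank ℝ V : ℝ) / 2 < s.re) :
    Integrable (fun x : V => ((1 + ‖x‖ ^ 2 / 2 : ℝ) : ℂ) ^ (-s)) ∧
    ∫ x : V, ((1 + ‖x‖ ^ 2 / 2 : ℝ) : ℂ) ^ (-s)
      = ((2 * π : ℝ) : ℂ) ^ ((finrank ℝ V : ℂ) / 2) * Complex.Gamma (s - finrank ℝ V / 2)
          / Complex.Gamma s := by
  have hs₀ : 0 < s.re := lt_of_le_of_lt (by positivity) hs
  have hΓ : Complex.Gamma s ≠ 0 := Complex.Gamma_ne_zero_of_re_pos hs₀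
  have hre : 0 < (s - finrank ℝ V / 2).re := by simpa using hs
  have hF := integrable_cpow_mul_cexp_neg_one_add_norm_sq_div_two_mul hs
  have hinner (x : V) : ∫ t in Ioi (0 : ℝ), (t : ℂ) ^ (s - 1) *
      cexp (-(((1 + ‖x‖ ^ 2 / 2 : ℝ) : ℂ) * t))
        = ((1 + ‖x‖ ^ 2 / 2 : ℝ) : ℂ) ^ (-s) * Complex.Gamma s :=
    (cpow_neg_mul_Gamma_eq_integral (by positivity) hs₀).symm
  constructor
  · simpa only [Function.uncurry_apply_pair, hinner, mul_inv_cancel_right₀ hΓ]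
      using hF.integral_prod_left.mul_const (Complex.Gamma s)⁻¹
  · rw [eq_div_iff hΓ, ← integral_mul_const]
    simp_rw [← hinner]
    rw [integral_integral_swap hF, setIntegral_congr_fun measurableSet_Ioi
      (fun t ht => integral_cpow_mul_cexp_neg_one_add_norm_sq_div_two_mul ht s),
      integral_const_mul, ← Complex.GammaIntegral, ← Complex.Gamma_eq_integral hre]

end InnerProductSpace

theorem integral_one_add_norm_sq_div_two_general (m : ℕ) (s : ℂ)
    (hs : (m : ℝ) / 2 < s.re) :
    Integrable (fun x : EuclideanSpace ℝ (Fin m) => ((1 + ‖x‖ ^ 2 / 2 : ℝ) : ℂ) ^ (-s)) ∧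
    ∫ x : EuclideanSpace ℝ (Fin m), ((1 + ‖x‖ ^ 2 / 2 : ℝ) : ℂ) ^ (-s)
      = ((2 * Real.pi : ℝ) : ℂ) ^ ((m : ℂ) / 2) * Complex.Gamma (s - (m : ℂ) / 2)
          / Complex.Gamma s := by
  simpa using integrable_and_integral_one_add_norm_sq_div_two_cpow_neg
    (V := EuclideanSpace ℝ (Fin m)) (by simpa using hs)

/-- For `m ≥ 1` and `s ∈ ℂ` with `Re(s) > m/2`,
`∫_{ℝ^m} (1 + ‖x‖²/2)^{-s} dx = (2π)^{m/2} Γ(s - m/2) / Γ(s)`. -/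
theorem integral_one_add_norm_sq_div_two (m : ℕ) (hm : 1 ≤ m) (s : ℂ)
    (hs : (m : ℝ) / 2 < s.re) :
    Integrable (fun x : EuclideanSpace ℝ (Fin m) => ((1 + ‖x‖ ^ 2 / 2 : ℝ) : ℂ) ^ (-s)) ∧
    ∫ x : EuclideanSpace ℝ (Fin m), ((1 + ‖x‖ ^ 2 / 2 : ℝ) : ℂ) ^ (-s)
      = ((2 * Real.pi : ℝ) : ℂ) ^ ((m : ℂ) / 2) * Complex.Gamma (s - (m : ℂ) / 2)
          / Complex.Gamma s :=
  integral_one_add_norm_sq_div_two_general m s hs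
end

section
/- For every real v and y > 0, K_v(y) satisfies the modified Bessel differential equation in the form (y d/dy)² K_v(y) = (v² + y²) K_v(y). -/
open MeasureTheory Real

/-- The modified Bessel function of the second kind,
`K_v(y) = (1/2) ∫_0^∞ e^{-y(t+1/t)/2} t^v dt/t`. -/
noncomputable def besselK (v y : ℝ) : ℝ :=
  (1 / 2) * ∫ t in Set.Ioi (0 : ℝ), Real.exp (-(y * (t + t⁻¹) / 2)) * t ^ (v - 1)

/-!
Differentiating under the integral sign gives `K_v' = -(K_{v-1} + K_{v+1}) / 2`, and integrating
`d/dt (e^{-y(t+1/t)/2} t^v)` over `(0, ∞)` gives the recurrence `y (K_{v+1} - K_{v-1}) = 2 v K_v`.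
Applying the derivative formula twice and eliminating `K_{v±2}` with the recurrence at `v ± 1`,
then `K_{v±1}` with the recurrence at `v`, leaves `(v² + y²) K_v`.
-/

open Set Filter Topology

theorem bddAbove_image_Ioi_of_tendsto {f : ℝ → ℝ} {a m₀ m : ℝ}
    (hf : ContinuousOn f (Ioi a)) (ha : Tendsto f (𝓝[>] a) (𝓝 m₀))
    (hb : Tendsto f atTop (𝓝 m)) : BddAbove (f '' Ioi a) := by
  obtain ⟨c, hc⟩ := ha.isBoundedUnder_le
  obtain ⟨u, hau, hu⟩ := mem_nhdsGT_iff_exists_Ioo_subset.1 hc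
  obtain ⟨d, hd⟩ := hb.isBoundedUnder_le
  obtain ⟨T, hT⟩ := eventually_atTop.1 hd
  have hcover : Ioi a ⊆ Ioo a u ∪ Icc u T ∪ Ici T := by
    intro x (hx : a < x)
    rcases lt_or_ge x u with hxu | hxu
    · exact Or.inl (Or.inl ⟨hx, hxu⟩)
    rcases le_or_gt x T with hxT | hxT
    · exact Or.inl (Or.inr ⟨hxu, hxT⟩)
    · exact Or.inr hxT.le
  refine BddAbove.mono (image_mono hcover) ?_
  rw [image_union, image_union]
  refine (BddAbove.union ⟨c, forall_mem_image.2 hu⟩ ?_).union ⟨d, forall_mem_image.2 hT⟩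
  exact isCompact_Icc.bddAbove_image (hf.mono fun x hx => hau.trans_le hx.1)

theorem integral_Ioi_of_hasDerivAt_of_tendsto_nhdsGT {f f' : ℝ → ℝ} {a m₀ m : ℝ}
    (hderiv : ∀ x ∈ Ioi a, HasDerivAt f (f' x) x) (hint : IntegrableOn f' (Ioi a))
    (ha : Tendsto f (𝓝[>] a) (𝓝 m₀)) (hb : Tendsto f atTop (𝓝 m)) :
    ∫ x in Ioi a, f' x = m - m₀ := by
  classical
  -- `f a` plays no role in the integral; redefine it as `m₀` to get continuity at `a⁺`.
  have hcont : ContinuousWithinAt (Function.update f a m₀) (Ici a) a := by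
    rwa [continuousWithinAt_update_same, Ici_sdiff_left]
  have hderiv' : ∀ x ∈ Ioi a, HasDerivAt (Function.update f a m₀) (f' x) x := fun x hx =>
    (hderiv x hx).congr_of_eventuallyEq <| by
      filter_upwards [Ioi_mem_nhds hx] with z hz using Function.update_of_ne hz.ne' _ _
  have hb' : Tendsto (Function.update f a m₀) atTop (𝓝 m) := hb.congr' <| by
    filter_upwards [Ioi_mem_atTop a] with z hz using (Function.update_of_ne hz.ne' _ _).symm
  rw [integral_Ioi_of_hasDerivAt_of_tendsto hcont hderiv' hint hb', Function.update_self]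

noncomputable def besselKIntegrand (v y t : ℝ) : ℝ :=
  exp (-(y * (t + t⁻¹) / 2)) * t ^ (v - 1)

theorem besselK_eq_integral (v : ℝ) :
    besselK v = fun y => (1 / 2) * ∫ t in Ioi 0, besselKIntegrand v y t := rfl

theorem besselKIntegrand_nonneg (v y : ℝ) {t : ℝ} (ht : 0 ≤ t) :
    0 ≤ besselKIntegrand v y t :=
  mul_nonneg (exp_pos _).le (rpow_nonneg ht _)

theorem continuousOn_besselKIntegrand (v y : ℝ) :
    ContinuousOn (besselKIntegrand v y) (Ioi 0) := by
  unfold besselKIntegrand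
  fun_prop (disch := intro t (ht : 0 < t); positivity)

theorem besselKIntegrand_inv (v y : ℝ) {t : ℝ} (ht : 0 < t) :
    besselKIntegrand (2 - v) y t⁻¹ = besselKIntegrand v y t := by
  rw [besselKIntegrand, besselKIntegrand, inv_inv, add_comm t⁻¹, inv_rpow ht.le,
    ← rpow_neg ht.le]
  ring_nf

theorem besselKIntegrand_le_of_le (v : ℝ) {y y' t : ℝ} (ht : 0 < t) (hyy' : y ≤ y') :
    besselKIntegrand v y' t ≤ besselKIntegrand v y t := by
  have : 0 < t + t⁻¹ := by positivity
  exact mul_le_mul_of_nonneg_right (exp_le_exp.2 (by nlinarith)) (rpow_nonneg ht.le _)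

theorem besselKIntegrand_add (v y y' t : ℝ) :
    besselKIntegrand v (y + y') t = exp (-(y * (t + t⁻¹) / 2)) * besselKIntegrand v y' t := by
  rw [besselKIntegrand, besselKIntegrand, ← mul_assoc, ← exp_add]
  ring_nf

theorem tendsto_besselKIntegrand_atTop (v : ℝ) {y : ℝ} (hy : 0 < y) :
    Tendsto (besselKIntegrand v y) atTop (𝓝 0) := by
  refine squeeze_zero' ?_ ?_
    ((tendsto_rpow_mul_exp_neg_mul_atTop_nhds_zero (v - 1) _ (half_pos hy)))
  · filter_upwards [eventually_ge_atTop 0] with t ht using besselKIntegrand_nonneg v y ht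
  · filter_upwards [eventually_gt_atTop 0] with t ht
    rw [mul_comm]
    exact mul_le_mul_of_nonneg_right (exp_le_exp.2 (by nlinarith [inv_pos.2 ht]))
      (rpow_nonneg ht.le _)

theorem tendsto_besselKIntegrand_nhdsGT_zero (v : ℝ) {y : ℝ} (hy : 0 < y) :
    Tendsto (besselKIntegrand v y) (𝓝[>] 0) (𝓝 0) :=
  ((tendsto_besselKIntegrand_atTop (2 - v) hy).comp tendsto_inv_nhdsGT_zero).congr' <| by
    filter_upwards [self_mem_nhdsWithin] with t (ht : 0 < t) using besselKIntegrand_inv v y ht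

theorem integrableOn_besselKIntegrand (v : ℝ) {y : ℝ} (hy : 0 < y) :
    IntegrableOn (besselKIntegrand v y) (Ioi 0) := by
  -- Half of the exponential decay dominates by `e^{-yt/4}`; what is left is bounded.
  obtain ⟨C, hC⟩ := bddAbove_image_Ioi_of_tendsto (continuousOn_besselKIntegrand v (y / 2))
    (tendsto_besselKIntegrand_nhdsGT_zero v (half_pos hy))
    (tendsto_besselKIntegrand_atTop v (half_pos hy))
  refine ((exp_neg_integrableOn_Ioi 0 (by positivity : 0 < y / 4)).const_mul C).mono'
    ((continuousOn_besselKIntegrand v y).aestronglyMeasurable measurableSet_Ioi) ?_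
  filter_upwards [ae_restrict_mem measurableSet_Ioi] with t (ht : 0 < t)
  rw [norm_of_nonneg (besselKIntegrand_nonneg v y ht.le), ← add_halves y, besselKIntegrand_add,
    mul_comm C]
  refine mul_le_mul (exp_le_exp.2 ?_) (hC (mem_image_of_mem _ ht))
    (besselKIntegrand_nonneg _ _ ht.le) (exp_pos _).le
  nlinarith [inv_pos.2 ht]

theorem hasDerivAt_besselKIntegrand_param (v y : ℝ) {t : ℝ} (ht : 0 < t) :
    HasDerivAt (fun x => besselKIntegrand v x t)
      (-(besselKIntegrand (v - 1) y t + besselKIntegrand (v + 1) y t) / 2) y := by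
  have hin : HasDerivAt (fun x => -(x * (t + t⁻¹) / 2)) (-((t + t⁻¹) / 2)) y :=
    ((hasDerivAt_mul_const _).div_const 2).neg
  refine (hin.exp.mul_const (t ^ (v - 1))).congr_deriv ?_
  rw [besselKIntegrand, besselKIntegrand, add_sub_cancel_right, sub_sub, one_add_one_eq_two,
    rpow_sub_one ht.ne', rpow_sub ht, rpow_two]
  field_simp
  ring

theorem hasDerivAt_besselKIntegrand (v y : ℝ) {t : ℝ} (ht : 0 < t) :
    HasDerivAt (besselKIntegrand (v + 1) y)
      (v * besselKIntegrand v y t +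
        y / 2 * (besselKIntegrand (v - 1) y t - besselKIntegrand (v + 1) y t)) t := by
  have hin : HasDerivAt (fun s => -(y * (s + s⁻¹) / 2)) (-(y * (1 + -(t ^ 2)⁻¹) / 2)) t :=
    ((((hasDerivAt_id' t).add (hasDerivAt_inv ht.ne')).const_mul y).div_const 2).neg
  have hpow := hasDerivAt_rpow_const (p := v + 1 - 1) (Or.inl ht.ne')
  refine (hin.exp.mul hpow).congr_deriv ?_
  simp only [besselKIntegrand, add_sub_cancel_right]
  rw [sub_sub, one_add_one_eq_two, rpow_sub_one ht.ne', rpow_sub ht, rpow_two]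
  field_simp
  ring

theorem hasDerivAt_besselK (v : ℝ) {y : ℝ} (hy : 0 < y) :
    HasDerivAt (besselK v) (-(besselK (v - 1) y + besselK (v + 1) y) / 2) y := by
  have hint : ∀ w, IntegrableOn (besselKIntegrand w y) (Ioi 0) :=
    fun w => integrableOn_besselKIntegrand w hy
  have hbound : ∀ᵐ t ∂volume.restrict (Ioi 0), ∀ x ∈ Metric.ball y (y / 2),
      ‖-(besselKIntegrand (v - 1) x t + besselKIntegrand (v + 1) x t) / 2‖ ≤
        (besselKIntegrand (v - 1) (y / 2) t + besselKIntegrand (v + 1) (y / 2) t) / 2 := by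
    filter_upwards [ae_restrict_mem measurableSet_Ioi] with t (ht : 0 < t) x hx
    have hyx : y / 2 ≤ x := by
      have := (abs_lt.1 (mem_ball_iff_norm.1 hx)).1
      linarith
    rw [norm_div, norm_neg, Real.norm_two, norm_of_nonneg (add_nonneg
      (besselKIntegrand_nonneg _ _ ht.le) (besselKIntegrand_nonneg _ _ ht.le))]
    gcongr <;> exact besselKIntegrand_le_of_le _ ht hyx
  have hderiv := (hasDerivAt_integral_of_dominated_loc_of_deriv_le
    (Metric.ball_mem_nhds y (half_pos hy)) (Eventually.of_forall fun x =>
      (continuousOn_besselKIntegrand v x).aestronglyMeasurable measurableSet_Ioi) (hint v)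
    (((hint _).add (hint _)).neg.div_const 2).aestronglyMeasurable hbound
    (((integrableOn_besselKIntegrand _ (half_pos hy)).add
      (integrableOn_besselKIntegrand _ (half_pos hy))).div_const 2)
    (by filter_upwards [ae_restrict_mem measurableSet_Ioi] with t (ht : 0 < t) x _
          using hasDerivAt_besselKIntegrand_param v x ht)).2
  rw [integral_div, integral_neg, integral_add (hint _) (hint _)] at hderiv
  rw [besselK_eq_integral]
  refine (hderiv.const_mul _).congr_deriv ?_
  simp only [besselK_eq_integral]
  ring

theorem besselK_add_one_sub_besselK_sub_one (v : ℝ) {y : ℝ} (hy : 0 < y) :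
    y * (besselK (v + 1) y - besselK (v - 1) y) = 2 * v * besselK v y := by
  have hint : ∀ w, IntegrableOn (besselKIntegrand w y) (Ioi 0) :=
    fun w => integrableOn_besselKIntegrand w hy
  have hibp := integral_Ioi_of_hasDerivAt_of_tendsto_nhdsGT
    (fun t (ht : 0 < t) => hasDerivAt_besselKIntegrand v y ht)
    (((hint _).const_mul _).add (((hint _).sub (hint _)).const_mul _))
    (tendsto_besselKIntegrand_nhdsGT_zero _ hy) (tendsto_besselKIntegrand_atTop _ hy)
  rw [integral_add (f := fun t => v * besselKIntegrand v y t)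
    (g := fun t => y / 2 * (besselKIntegrand (v - 1) y t - besselKIntegrand (v + 1) y t))
    ((hint _).const_mul _) (((hint _).sub (hint _)).const_mul _), integral_const_mul,
    integral_const_mul, integral_sub (hint _) (hint _), sub_zero] at hibp
  simp only [besselK_eq_integral]
  linear_combination -hibp

/-- The modified Bessel differential equation in the form
`(y d/dy)² K_v(y) = (v² + y²) K_v(y)` for `y > 0`. -/
theorem besselK_ode (v y : ℝ) (hy : 0 < y) :
    y * deriv (fun z : ℝ => z * deriv (besselK v) z) y = (v ^ 2 + y ^ 2) * besselK v y := by
  have hloc : (fun z => z * deriv (besselK v) z) =ᶠ[𝓝 y]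
      fun z => -(z * (besselK (v - 1) z + besselK (v + 1) z)) / 2 := by
    filter_upwards [Ioi_mem_nhds hy] with z (hz : 0 < z)
    rw [(hasDerivAt_besselK v hz).deriv]
    ring
  have hderiv : HasDerivAt (fun z => -(z * (besselK (v - 1) z + besselK (v + 1) z)) / 2) _ y :=
    ((hasDerivAt_id' y).mul
      ((hasDerivAt_besselK (v - 1) hy).add (hasDerivAt_besselK (v + 1) hy))).neg.div_const 2
  have hlow := besselK_add_one_sub_besselK_sub_one (v - 1) hy
  have hmid := besselK_add_one_sub_besselK_sub_one v hy
  have hhigh := besselK_add_one_sub_besselK_sub_one (v + 1) hy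
  rw [hloc.deriv_eq, hderiv.deriv]
  simp only [Pi.add_apply, sub_add_cancel, add_sub_cancel_right] at hlow hhigh ⊢
  linear_combination (-y / 4) * hlow + (y / 4) * hhigh + (v / 2) * hmid
end
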